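/- For every pseudo-Boolean function f: {0,1}^n → ℝ and every S ⊆ N, Φ_B(f,S) = Σ_{T⊆S, |T| odd} (1/2)^{|T|−1} I_B(f,T). -/

import Mathlib

open Finset

/-- The discrete `S`-derivative of a set function (closed form). -/
noncomputable def deltaD {n : ℕ} (S : Finset (Fin n)) (f : Finset (Fin n) → ℝ)
    (T : Finset (Fin n)) : ℝ :=
  ∑ R ∈ S.powerset, (-1 : ℝ) ^ (S.card - R.card) * f (T ∪ R)

/-- The Banzhaf interaction index. -/
noncomputable def banzhafInteraction {n : ℕ} (f : Finset (Fin n) → ℝ) (S : Finset (Fin n)) : ℝ :=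
  (1 / 2 ^ (n - S.card)) * ∑ T ∈ (univ \ S).powerset, deltaD S f T

/-- The Banzhaf influence index. -/
noncomputable def banzhafInfluence {n : ℕ} (f : Finset (Fin n) → ℝ) (S : Finset (Fin n)) : ℝ :=
  (1 / 2 ^ (n - S.card)) * ∑ T ∈ (univ \ S).powerset, (f (T ∪ S) - f T)

/-!
Both sides are linear in `f`. Merging the two summations of the interaction index into one over
`M = R ∪ A` (`R ⊆ N \ L`, `A ⊆ L`) gives `I_B(f,L) = 2^{-(n-|L|)} Σ_M (-1)^{|L \ M|} f(M)`, so the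
right-hand side is `2^{1-n} Σ_M c(M) f(M)` with `c(M) = Σ_{L ⊆ S, |L| odd} (-1)^{|L \ M|}`.
Restricting to odd `L` halves the difference between the sign sums
`Σ_{L ⊆ S} (-1)^{|L \ M|} = 2^{|S|} [S ⊆ M]` and `Σ_{L ⊆ S} (-1)^{|L ∩ M|} = 2^{|S|} [S ∩ M = ∅]`,
so `c(M) = 2^{|S|-1} ([S ⊆ M] - [S ∩ M = ∅])`, which is the coefficient of `f(M)` in `Φ_B(f,S)`.
-/

section PowersetSums

variable {α β R : Type*} [DecidableEq α]

theorem sum_powerset_union_of_disjoint [AddCommMonoid β] {s t : Finset α} (h : Disjoint s t)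
    (g : Finset α → β) :
    ∑ u ∈ (s ∪ t).powerset, g u = ∑ a ∈ s.powerset, ∑ b ∈ t.powerset, g (a ∪ b) := by
  rw [← sum_product']
  refine (sum_nbij' (fun p => p.1 ∪ p.2) (fun u => (u ∩ s, u ∩ t)) ?_ ?_ ?_ ?_ ?_).symm
  · simp only [mem_product, mem_powerset]; grind
  · simp only [mem_product, mem_powerset]; grind
  · simp only [mem_product, mem_powerset, Prod.ext_iff]; grind [disjoint_left]
  · simp only [mem_powerset]; grind
  · simp

theorem sum_powerset_neg_one_pow_card_sdiff [CommRing R] (s t : Finset α) :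
    ∑ u ∈ s.powerset, (-1 : R) ^ #(u \ t) = if s ⊆ t then 2 ^ #s else 0 := by
  have sign_eq_prod (u : Finset α) :
      (-1 : R) ^ #(u \ t) = ∏ i ∈ u, if i ∈ t then 1 else -1 := by
    rw [prod_ite, prod_const_one, one_mul, prod_const, filter_notMem_eq_sdiff]
  simp_rw [sign_eq_prod, ← prod_add_one]
  split_ifs with hst
  · rw [prod_congr rfl fun i hi => by rw [if_pos (hst hi)], prod_const]
    norm_num
  · obtain ⟨i, his, hit⟩ := not_subset.1 hst
    exact prod_eq_zero his (by rw [if_neg hit]; ring)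

theorem sum_powerset_neg_one_pow_card_inter [Fintype α] [CommRing R] (s t : Finset α) :
    ∑ u ∈ s.powerset, (-1 : R) ^ #(u ∩ t) = if Disjoint s t then 2 ^ #s else 0 := by
  simp_rw [← subset_compl_iff_disjoint_right, ← sum_powerset_neg_one_pow_card_sdiff,
    sdiff_compl, inf_eq_inter]

theorem two_mul_sum_powerset_odd_neg_one_pow_card_sdiff [Fintype α] [CommRing R]
    (s t : Finset α) :
    2 * ∑ u ∈ s.powerset with Odd #u, (-1 : R) ^ #(u \ t)
      = (if s ⊆ t then 2 ^ #s else 0) - (if Disjoint s t then 2 ^ #s else 0) := by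
  rw [← sum_powerset_neg_one_pow_card_sdiff, ← sum_powerset_neg_one_pow_card_inter, sum_filter,
    mul_sum, ← sum_sub_distrib]
  refine sum_congr rfl fun u _ => ?_
  have inter_sign : (-1 : R) ^ #(u ∩ t) = (-1) ^ #u * (-1) ^ #(u \ t) := by
    rw [← card_inter_add_card_sdiff u t, pow_add, mul_assoc, ← pow_add, ← two_mul, pow_mul,
      neg_one_sq, one_pow, mul_one]
  rw [inter_sign]
  rcases Nat.even_or_odd #u with hu | hu
  · rw [if_neg (Nat.not_odd_iff_even.2 hu), hu.neg_one_pow]; ring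
  · rw [if_pos hu, hu.neg_one_pow]; ring

theorem sum_ite_subset_eq_sum_powerset_compl [Fintype α] [AddCommMonoid β] (s : Finset α)
    (g : Finset α → β) :
    ∑ u, (if s ⊆ u then g u else 0) = ∑ v ∈ (univ \ s).powerset, g (v ∪ s) := by
  rw [← sum_filter]
  refine sum_nbij' (fun u => u \ s) (fun v => v ∪ s) ?_ ?_ ?_ ?_ ?_
  all_goals simp only [mem_filter, mem_univ, true_and, mem_powerset]
  · grind
  · grind
  · grind
  · grind
  · intro u hu; rw [sdiff_union_of_subset hu]

theorem sum_ite_disjoint_eq_sum_powerset_compl [Fintype α] [AddCommMonoid β] (s : Finset α)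
    (g : Finset α → β) :
    ∑ u, (if Disjoint s u then g u else 0) = ∑ v ∈ (univ \ s).powerset, g v := by
  rw [← sum_filter]
  congr 1
  ext u
  simp [subset_sdiff, disjoint_comm]

end PowersetSums

section Banzhaf

variable {n : ℕ} (f : Finset (Fin n) → ℝ)

theorem sum_powerset_compl_deltaD (L : Finset (Fin n)) :
    ∑ R ∈ (univ \ L).powerset, deltaD L f R = ∑ M, (-1 : ℝ) ^ #(L \ M) * f M := by
  rw [← powerset_univ]
  conv_rhs => rw [← sdiff_union_of_subset (subset_univ L),
    sum_powerset_union_of_disjoint sdiff_disjoint]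
  refine sum_congr rfl fun R hR => sum_congr rfl fun A hA => ?_
  have hRL : Disjoint R L := disjoint_of_subset_left (mem_powerset.1 hR) sdiff_disjoint
  have hsdiff : L \ (R ∪ A) = L \ A := by grind [disjoint_left]
  rw [hsdiff, card_sdiff_of_subset (mem_powerset.1 hA)]

theorem half_pow_mul_banzhafInteraction {L : Finset (Fin n)} (hL : L.Nonempty) :
    (1 / 2 : ℝ) ^ (#L - 1) * banzhafInteraction f L
      = 2 / 2 ^ n * ∑ M, (-1 : ℝ) ^ #(L \ M) * f M := by
  have hLn : #L ≤ n := by simpa using card_le_univ L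
  rw [banzhafInteraction, sum_powerset_compl_deltaD, ← mul_assoc]
  congr 1
  rw [div_pow, one_pow, div_mul_div_comm, one_mul, ← pow_add,
    div_eq_div_iff (by positivity) (by positivity), one_mul, ← pow_succ']
  congr 1
  have := hL.card_pos
  omega

theorem banzhafInfluence_eq_sum (S : Finset (Fin n)) :
    banzhafInfluence f S
      = 2 ^ #S / 2 ^ n *
          ∑ M, ((if S ⊆ M then f M else 0) - (if Disjoint S M then f M else 0)) := by
  have hS : #S ≤ n := by simpa using card_le_univ S
  have normalization : (1 : ℝ) / 2 ^ (n - #S) = 2 ^ #S / 2 ^ n := by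
    rw [div_eq_div_iff (by positivity) (by positivity), one_mul, ← pow_add,
      Nat.add_sub_cancel' hS]
  rw [banzhafInfluence, sum_sub_distrib, sum_sub_distrib, sum_ite_subset_eq_sum_powerset_compl,
    sum_ite_disjoint_eq_sum_powerset_compl, normalization]

end Banzhaf

/-- `Φ_B(f,S) = Σ_{T⊆S, |T| odd} (1/2)^{|T|−1} I_B(f,T)`. -/
theorem banzhafInfluence_eq_sum_interaction (n : ℕ) (f : Finset (Fin n) → ℝ)
    (S : Finset (Fin n)) :
    banzhafInfluence f S
      = ∑ T ∈ S.powerset.filter (fun T => Odd T.card),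
          (1 / 2 : ℝ) ^ (T.card - 1) * banzhafInteraction f T := by
  set c : Finset (Fin n) → ℝ := fun M =>
    ∑ L ∈ S.powerset.filter (fun T => Odd T.card), (-1 : ℝ) ^ #(L \ M)
  have odd_nonempty : ∀ L ∈ S.powerset.filter (fun T => Odd T.card), L.Nonempty :=
    fun L hL => card_pos.1 (mem_filter.1 hL).2.pos
  calc banzhafInfluence f S
      = ∑ M, 2 ^ #S / 2 ^ n *
          ((if S ⊆ M then f M else 0) - (if Disjoint S M then f M else 0)) := by
        rw [banzhafInfluence_eq_sum, mul_sum]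
    _ = ∑ M, 2 / 2 ^ n * (c M * f M) := by
        refine sum_congr rfl fun M _ => ?_
        rw [show 2 / 2 ^ n * (c M * f M) = 2 * c M * f M / 2 ^ n by ring,
          two_mul_sum_powerset_odd_neg_one_pow_card_sdiff]
        split_ifs <;> ring
    _ = _ := by
        rw [sum_congr rfl fun L hL => half_pow_mul_banzhafInteraction f (odd_nonempty L hL),
          ← mul_sum, ← mul_sum]
        simp only [c, sum_mul]
        rw [sum_comm]
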